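/- arXiv:1704.02004 — 2 statements merged into one kernel-verified Lean document; each statement's English description precedes it below -/
import Mathlib

section
/- Let T be a rooted binary phylogenetic tree on a finite taxon set X, equipped with the rooted triple metrization, and let x ≠ y be leaves. If v = MRCA(x,y) and k is the number of leaf descendants of v (i.e., k is the size of the smallest clade displayed on T containing both x and y), then the sum of the edge weights on the path between x and y equals 2k − 2. -/
open Function

/-- A rooted phylogenetic tree on taxon set `X`, with vertex set `V`: there is a root,
every vertex reaches the root by iterating the parent map, the leaves (vertices with no
children) are bijectively labeled by the taxa, and every internal vertex has at least
two children (so the root has degree ≥ 2 and other internal vertices degree ≥ 3). -/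
structure RPhylo (X V : Type*) where
  root : V
  parent : V → V
  leaf : X → V
  parent_root : parent root = root
  reach : ∀ v : V, ∃ n : ℕ, parent^[n] v = root
  leaf_inj : Function.Injective leaf
  leaf_no_child : ∀ (x : X) (w : V), parent w = leaf x → w = leaf x
  leaf_surj : ∀ v : V, (∀ w : V, parent w = v → w = v) → ∃ x : X, leaf x = v
  internal_two : ∀ v : V, ({w | parent w = v ∧ w ≠ v} : Set V) = ∅ ∨
      2 ≤ ({w | parent w = v ∧ w ≠ v} : Set V).ncard

namespace RPhylo

variable {X V : Type*}

/-- The children of a vertex. -/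
def children (T : RPhylo X V) (v : V) : Set V := {w | T.parent w = v ∧ w ≠ v}

/-- A rooted phylogenetic tree is binary if every non-leaf vertex has exactly two
children (root of degree 2, other internal vertices of degree 3). -/
def IsBinary (T : RPhylo X V) : Prop :=
  ∀ v : V, T.children v = ∅ ∨ (T.children v).ncard = 2

/-- `u` is a (weak) ancestor of `v`. -/
def Anc (T : RPhylo X V) (u v : V) : Prop := ∃ n : ℕ, T.parent^[n] v = u

/-- The set of taxa labelling leaf descendants of `v` (a leaf is its own descendant). -/
def clade (T : RPhylo X V) (v : V) : Set X := {x | T.Anc v (T.leaf x)}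

/-- `m` is the most recent common ancestor of the set `S` of vertices. -/
def IsMRCA (T : RPhylo X V) (S : Set V) (m : V) : Prop :=
  (∀ v ∈ S, T.Anc m v) ∧ ∀ a : V, (∀ v ∈ S, T.Anc a v) → T.Anc a m

/-- Weight, under the rooted triple metrization, of the edge from `v` to its parent:
the drop in the number of leaf descendants from parent to child. -/
noncomputable def wRT (T : RPhylo X V) (v : V) : ℕ :=
  (T.clade (T.parent v)).ncard - (T.clade v).ncard

/-- Sum of the weights (under the weighting `w`, where `w v` is the weight of the
edge from `v` to its parent) of the first `n` edges on the path from `v` toward the root. -/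
def upSum (T : RPhylo X V) (w : V → ℕ) : V → ℕ → ℕ
  | _, 0 => 0
  | v, n + 1 => w v + T.upSum w (T.parent v) n

/-- `T` displays the rooted triple `ab|c`: the MRCA of `a,b` is a proper descendant of
the MRCA of `a,b,c`. -/
def DisplaysTriple (T : RPhylo X V) (a b c : X) : Prop :=
  ∃ m₁ m₂ : V, T.IsMRCA {T.leaf a, T.leaf b} m₁ ∧
    T.IsMRCA {T.leaf a, T.leaf b, T.leaf c} m₂ ∧ m₁ ≠ m₂ ∧ T.Anc m₂ m₁

/-- `T` displays the degenerate (star) rooted triple `abc`: the induced tree on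
`{a,b,c}` is unresolved, i.e. all three pairwise MRCAs coincide. -/
def DisplaysStarTriple (T : RPhylo X V) (a b c : X) : Prop :=
  ∃ m : V, T.IsMRCA {T.leaf a, T.leaf b} m ∧ T.IsMRCA {T.leaf a, T.leaf c} m ∧
    T.IsMRCA {T.leaf b, T.leaf c} m

end RPhylo

namespace RPhylo

variable {X V : Type*}

lemma clade_subset_parent (T : RPhylo X V) (u : V) :
    T.clade u ⊆ T.clade (T.parent u) := by
  intro z hz
  obtain ⟨n, hn⟩ := hz
  exact ⟨n + 1, by rw [Function.iterate_succ_apply', hn]⟩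

lemma clade_subset_iterate (T : RPhylo X V) (u : V) (n : ℕ) :
    T.clade u ⊆ T.clade (T.parent^[n] u) := by
  induction n with
  | zero => exact subset_rfl
  | succ n ih =>
    rw [Function.iterate_succ_apply']
    exact ih.trans (T.clade_subset_parent _)

lemma upSum_wRT [Fintype X] (T : RPhylo X V) (n : ℕ) (u : V) :
    T.upSum T.wRT u n = (T.clade (T.parent^[n] u)).ncard - (T.clade u).ncard := by
  induction n generalizing u with
  | zero => simp [upSum]
  | succ n ih =>
    have h1 : (T.clade u).ncard ≤ (T.clade (T.parent u)).ncard :=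
      Set.ncard_le_ncard (T.clade_subset_parent u) (Set.toFinite _)
    have h2 : (T.clade (T.parent u)).ncard ≤ (T.clade (T.parent^[n] (T.parent u))).ncard :=
      Set.ncard_le_ncard (T.clade_subset_iterate _ _) (Set.toFinite _)
    rw [upSum, ih, wRT, Function.iterate_succ_apply]
    omega

lemma iterate_eq_leaf (T : RPhylo X V) (x : X) (n : ℕ) (w : V)
    (h : T.parent^[n] w = T.leaf x) : w = T.leaf x := by
  induction n generalizing w with
  | zero => exact h
  | succ n ih =>
    rw [Function.iterate_succ_apply'] at h
    exact ih w (T.leaf_no_child x _ h)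

lemma clade_leaf (T : RPhylo X V) (x : X) : T.clade (T.leaf x) = {x} := by
  ext z
  constructor
  · rintro ⟨n, hn⟩
    exact T.leaf_inj (T.iterate_eq_leaf x n _ hn)
  · rintro rfl
    exact ⟨0, rfl⟩

end RPhylo

/-- **Theorem.** In a rooted binary phylogenetic tree on `X` equipped with the rooted
triple metrization, for leaves `x ≠ y` with `v = MRCA(x,y)` having `k` leaf descendants
(so `k` is the size of the smallest displayed clade containing `x` and `y`), the sum of
the edge weights on the path between `x` and `y` equals `2k - 2`. -/
theorem rooted_triple_metrization_path_sum
    {X V : Type*} [Fintype X] [Fintype V]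
    (T : RPhylo X V) (hbin : T.IsBinary)
    (x y : X) (hxy : x ≠ y)
    (v : V) (hv : T.IsMRCA {T.leaf x, T.leaf y} v)
    (kx ky : ℕ)
    (hkx : T.parent^[kx] (T.leaf x) = v) (hkx' : ∀ i < kx, T.parent^[i] (T.leaf x) ≠ v)
    (hky : T.parent^[ky] (T.leaf y) = v) (hky' : ∀ i < ky, T.parent^[i] (T.leaf y) ≠ v) :
    T.upSum T.wRT (T.leaf x) kx + T.upSum T.wRT (T.leaf y) ky
      = 2 * (T.clade v).ncard - 2 := by
  have hx : x ∈ T.clade v := ⟨kx, hkx⟩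
  have hk : 1 ≤ (T.clade v).ncard :=
    (Set.ncard_pos (Set.toFinite _)).2 ⟨x, hx⟩
  rw [T.upSum_wRT kx, T.upSum_wRT ky, hkx, hky, T.clade_leaf x, T.clade_leaf y]
  simp only [Set.ncard_singleton]
  omega
end

section
/- Let T be a rooted binary phylogenetic tree on a finite taxon set X of size N, equipped with the clade metrization, and let d_Cl denote the induced tree metric on X. Then for all distinct x, y ∈ X, d_Cl(x,y) = 2·(1 + N − |C_{x,y}|), where C_{x,y} is the set of clades displayed on T that contain both x and y. -/
open Function

namespace RPhylo

open scoped Classical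

variable {X V : Type*}

/-- The depth of a vertex: the minimal number of parent-steps needed to reach the root. -/
noncomputable def depth [DecidableEq V] (T : RPhylo X V) (v : V) : ℕ :=
  Nat.find (T.reach v)

/-- The node numbering of the clade metrization: the root is numbered `N`, numbers
decrease by one with each parent-to-child step among internal vertices, and each
leaf is numbered `0`. -/
noncomputable def nodeNum [Fintype X] [DecidableEq V] (T : RPhylo X V) (v : V) : ℕ :=
  if T.children v = ∅ then 0 else Fintype.card X - T.depth v

/-- Weight, under the clade metrization, of the edge from `v` to its parent: the
positive difference of the numbers assigned to its endpoints. -/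
noncomputable def wCl [Fintype X] [DecidableEq V] (T : RPhylo X V) (v : V) : ℕ :=
  T.nodeNum (T.parent v) - T.nodeNum v

end RPhylo

namespace RPhylo

variable {X V : Type*}

lemma iterate_root (T : RPhylo X V) (n : ℕ) : T.parent^[n] T.root = T.root := by
  induction n with
  | zero => rfl
  | succ n ih => rw [Function.iterate_succ_apply', ih, T.parent_root]

lemma anc_trans (T : RPhylo X V) {u v w : V} (h1 : T.Anc u v) (h2 : T.Anc v w) :
    T.Anc u w := by
  obtain ⟨a, ha⟩ := h1
  obtain ⟨b, hb⟩ := h2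
  exact ⟨a + b, by rw [Function.iterate_add_apply, hb, ha]⟩

lemma eq_root_of_cycle (T : RPhylo X V) {v : V} {n : ℕ} (hn : 0 < n)
    (h : T.parent^[n] v = v) : v = T.root := by
  obtain ⟨k, hk⟩ := T.reach v
  have hmul : ∀ j : ℕ, T.parent^[n * j] v = v := by
    intro j
    induction j with
    | zero => rfl
    | succ j ih =>
      rw [Nat.mul_succ, Function.iterate_add_apply, h, ih]
  have hge : ∀ t : ℕ, k ≤ t → T.parent^[t] v = T.root := by
    intro t ht
    have : T.parent^[(t - k) + k] v = T.root := by
      rw [Function.iterate_add_apply, hk, T.iterate_root]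
    rwa [Nat.sub_add_cancel ht] at this
  have := hge (n * (k + 1)) (by nlinarith)
  rw [hmul (k + 1)] at this
  exact this

lemma eq_root_of_parent_eq (T : RPhylo X V) {v : V} (h : T.parent v = v) : v = T.root :=
  T.eq_root_of_cycle Nat.one_pos h

lemma eq_leaf_of_iterate (T : RPhylo X V) {z : X} :
    ∀ (n : ℕ) (v : V), T.parent^[n] v = T.leaf z → v = T.leaf z := by
  intro n
  induction n with
  | zero => intro v h; exact h
  | succ n ih =>
    intro v h
    rw [Function.iterate_succ_apply] at h
    exact T.leaf_no_child z v (ih _ h)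

lemma children_leaf (T : RPhylo X V) (z : X) : T.children (T.leaf z) = ∅ := by
  ext w
  simp only [children, Set.mem_setOf_eq, Set.mem_empty_iff_false, iff_false, not_and,
    not_ne_iff]
  exact T.leaf_no_child z w

section Depth

variable [DecidableEq V]

lemma depth_spec (T : RPhylo X V) (v : V) : T.parent^[T.depth v] v = T.root :=
  Nat.find_spec (T.reach v)

lemma depth_min (T : RPhylo X V) {v : V} {i : ℕ} (h : i < T.depth v) :
    T.parent^[i] v ≠ T.root :=
  Nat.find_min (T.reach v) h

lemma depth_le (T : RPhylo X V) {v : V} {n : ℕ} (h : T.parent^[n] v = T.root) :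
    T.depth v ≤ n :=
  Nat.find_le h

lemma iterate_of_depth_le (T : RPhylo X V) {v : V} {t : ℕ} (h : T.depth v ≤ t) :
    T.parent^[t] v = T.root := by
  have : T.parent^[(t - T.depth v) + T.depth v] v = T.root := by
    rw [Function.iterate_add_apply, T.depth_spec, T.iterate_root]
  rwa [Nat.sub_add_cancel h] at this

lemma depth_pos (T : RPhylo X V) {v : V} (h : v ≠ T.root) : 0 < T.depth v := by
  rcases Nat.eq_zero_or_pos (T.depth v) with h0 | h0
  · exact absurd (by simpa [h0] using T.depth_spec v) h
  · exact h0

lemma depth_child (T : RPhylo X V) {w v : V} (hp : T.parent w = v) (hne : w ≠ v) :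
    T.depth w = T.depth v + 1 := by
  have hwr : w ≠ T.root := by
    intro h
    subst h
    exact hne (by rw [← hp, T.parent_root])
  have hpos := T.depth_pos hwr
  have h1 : T.depth v ≤ T.depth w - 1 := by
    apply T.depth_le
    have := T.depth_spec w
    rw [show T.depth w = (T.depth w - 1) + 1 by omega, Function.iterate_succ_apply, hp]
      at this
    exact this
  have h2 : T.depth w ≤ T.depth v + 1 := by
    apply T.depth_le
    rw [Function.iterate_succ_apply, hp]
    exact T.depth_spec v
  omega

lemma depth_iterate (T : RPhylo X V) {v : V} {i : ℕ} (h : i ≤ T.depth v) :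
    T.depth (T.parent^[i] v) = T.depth v - i := by
  have h1 : T.depth (T.parent^[i] v) ≤ T.depth v - i := by
    apply T.depth_le
    rw [← Function.iterate_add_apply]
    rw [show T.depth v - i + i = T.depth v by omega]
    exact T.depth_spec v
  have h2 : T.depth v - i ≤ T.depth (T.parent^[i] v) := by
    by_contra hc
    push_neg at hc
    have := T.depth_spec (T.parent^[i] v)
    rw [← Function.iterate_add_apply] at this
    have := T.depth_le this
    omega
  omega

lemma depth_lt_card [Fintype V] (T : RPhylo X V) (v : V) :
    T.depth v < Fintype.card V := by
  have hinj : Set.InjOn (fun i => T.parent^[i] v) ↑(Finset.range (T.depth v + 1)) := by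
    have key : ∀ i j, i < j → j ≤ T.depth v → T.parent^[i] v ≠ T.parent^[j] v := by
      intro i j hlt hj hij
      have hcyc : T.parent^[j - i] (T.parent^[i] v) = T.parent^[i] v := by
        conv_lhs => rw [← Function.iterate_add_apply]
        rw [show j - i + i = j by omega]
        exact hij.symm
      have hroot := T.eq_root_of_cycle (by omega) hcyc
      exact T.depth_min (by omega : i < T.depth v) hroot
    intro i hi j hj hij
    simp only [Finset.coe_range, Set.mem_Iio] at hi hj
    rcases lt_trichotomy i j with h | h | h
    · exact absurd hij (key i j h (by omega))
    · exact h
    · exact absurd hij.symm (key j i h (by omega))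
  have h := Set.ncard_le_ncard
    (Set.subset_univ ((fun i => T.parent^[i] v) '' ↑(Finset.range (T.depth v + 1))))
    Set.finite_univ
  rw [Set.ncard_image_of_injOn hinj, Set.ncard_coe_finset, Finset.card_range,
    Set.ncard_univ, Nat.card_eq_fintype_card] at h
  omega

end Depth

lemma clade_mono (T : RPhylo X V) {u v : V} (h : T.Anc u v) :
    T.clade v ⊆ T.clade u := fun _ hz => T.anc_trans h hz

lemma sibling_aux (T : RPhylo X V) {u v w l : V}
    (hv : T.parent v = u) (hw : T.parent w = u) (hwu : w ≠ u) (hvw : v ≠ w)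
    {a b : ℕ} (ha : T.parent^[a] l = v) (hb : T.parent^[b] l = w) (hab : a ≤ b) :
    False := by
  have hcb : T.parent^[b - a] v = w := by
    rw [← ha, ← Function.iterate_add_apply, show b - a + a = b by omega]
    exact hb
  rcases Nat.eq_zero_or_pos (b - a) with h0 | h0
  · rw [h0] at hcb; exact hvw hcb
  · have hw' : T.parent^[b - a - 1] u = w := by
      rw [show b - a = (b - a - 1) + 1 by omega, Function.iterate_succ_apply, hv] at hcb
      exact hcb
    have hcyc : T.parent^[(b - a - 1) + 1] u = u := by
      rw [Function.iterate_succ_apply', hw', hw]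
    have hur := T.eq_root_of_cycle (Nat.succ_pos _) hcyc
    rcases Nat.eq_zero_or_pos (b - a - 1) with h1 | h1
    · rw [h1] at hw'
      exact hwu hw'.symm
    · rw [hur, T.iterate_root] at hw'
      exact hwu (by rw [← hw', hur])

lemma sibling_disj (T : RPhylo X V) {u v w : V}
    (hv : T.parent v = u) (hw : T.parent w = u) (hvu : v ≠ u) (hwu : w ≠ u)
    (hvw : v ≠ w) {z : X} (hzv : z ∈ T.clade v) (hzw : z ∈ T.clade w) : False := by
  obtain ⟨a, ha⟩ := hzv
  obtain ⟨b, hb⟩ := hzw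
  rcases le_total a b with hab | hab
  · exact T.sibling_aux hv hw hwu hvw ha hb hab
  · exact T.sibling_aux hw hv hvu (Ne.symm hvw) hb ha hab

lemma anc_parent (T : RPhylo X V) (v : V) : T.Anc (T.parent v) v := ⟨1, rfl⟩

lemma clade_nonempty [Fintype V] [DecidableEq V] (T : RPhylo X V) (v : V) :
    (T.clade v).Nonempty := by
  have key : ∀ (k : ℕ) (v : V), Fintype.card V - T.depth v ≤ k → (T.clade v).Nonempty := by
    intro k
    induction k with
    | zero => intro v hv; have := T.depth_lt_card v; omega
    | succ k ih =>
      intro v hv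
      rcases eq_or_ne (T.children v) ∅ with hc | hc
      · obtain ⟨z, hz⟩ := T.leaf_surj v (by
          intro w hw
          by_contra hne
          exact absurd (Set.eq_empty_iff_forall_notMem.mp hc w ⟨hw, hne⟩) (by simp))
        exact ⟨z, ⟨0, hz⟩⟩
      · obtain ⟨w, hw, hwv⟩ := Set.nonempty_iff_ne_empty.mpr hc
        have hd := T.depth_child hw hwv
        obtain ⟨z, hz⟩ := ih w (by have := T.depth_lt_card v; omega)
        exact ⟨z, T.clade_mono (hw ▸ T.anc_parent w) hz⟩
  exact key (Fintype.card V) v (by omega)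

lemma clade_exists_not [Fintype V] [DecidableEq V] (T : RPhylo X V) {w v : V}
    (hp : T.parent w = v) (hne : w ≠ v) :
    ∃ z : X, z ∈ T.clade v ∧ z ∉ T.clade w := by
  have hmem : w ∈ T.children v := ⟨hp, hne⟩
  have h2 : 2 ≤ (T.children v).ncard := by
    rcases T.internal_two v with h | h
    · exact absurd (Set.eq_empty_iff_forall_notMem.mp h w hmem) (by simp)
    · exact h
  have h1 : 1 < (T.children v).ncard := h2
  rw [Set.one_lt_ncard_iff (Set.toFinite _)] at h1
  obtain ⟨a, b, ha, hb, hab⟩ := h1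
  have hsib : ∃ s ∈ T.children v, s ≠ w := by
    rcases eq_or_ne a w with rfl | haw
    · exact ⟨b, hb, fun h => hab h.symm⟩
    · exact ⟨a, ha, haw⟩
  obtain ⟨s, ⟨hsp, hsv⟩, hsw⟩ := hsib
  obtain ⟨z, hz⟩ := T.clade_nonempty s
  refine ⟨z, T.clade_mono (hsp ▸ T.anc_parent s) hz, fun hzw => ?_⟩
  exact T.sibling_disj hsp hp hsv hne hsw hz hzw

lemma upSum_mono_aux (T : RPhylo X V) (f : V → ℕ) :
    ∀ (n : ℕ) (v : V), (∀ i < n, f (T.parent^[i] v) ≤ f (T.parent^[i + 1] v)) →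
      f v ≤ f (T.parent^[n] v) := by
  intro n
  induction n with
  | zero => intro v _; simp
  | succ n ih =>
    intro v h
    have h1 := ih v (fun i hi => h i (by omega))
    have h2 := h n (by omega)
    omega

lemma upSum_telescope (T : RPhylo X V) (f : V → ℕ) :
    ∀ (n : ℕ) (v : V), (∀ i < n, f (T.parent^[i] v) ≤ f (T.parent^[i + 1] v)) →
      T.upSum (fun w => f (T.parent w) - f w) v n = f (T.parent^[n] v) - f v := by
  intro n
  induction n with
  | zero => intro v _; simp [upSum]
  | succ n ih =>
    intro v h
    have hshift : ∀ i < n, f (T.parent^[i] (T.parent v)) ≤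
        f (T.parent^[i + 1] (T.parent v)) := by
      intro i hi
      rw [← Function.iterate_succ_apply T.parent i v,
        ← Function.iterate_succ_apply T.parent (i + 1) v]
      exact h (i + 1) (by omega)
    have hrec := ih (T.parent v) hshift
    have h0 : f v ≤ f (T.parent v) := h 0 (Nat.succ_pos n)
    have h1 : f (T.parent v) ≤ f (T.parent^[n] (T.parent v)) :=
      T.upSum_mono_aux f n (T.parent v) hshift
    simp only [upSum]
    rw [hrec, Function.iterate_succ_apply]
    omega

lemma nodeNum_leaf [Fintype X] [DecidableEq V] (T : RPhylo X V) (z : X) :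
    T.nodeNum (T.leaf z) = 0 := by
  rw [nodeNum, if_pos (T.children_leaf z)]

lemma upSum_wCl [Fintype X] [Fintype V] [DecidableEq V] (T : RPhylo X V)
    {l : X} {m : V} {k : ℕ} (hk : T.parent^[k] (T.leaf l) = m)
    (hk' : ∀ i < k, T.parent^[i] (T.leaf l) ≠ m) (hm : T.children m ≠ ∅) :
    T.upSum T.wCl (T.leaf l) k = Fintype.card X - T.depth m := by
  have hroot : ∀ i < k, T.parent^[i] (T.leaf l) ≠ T.root := by
    intro i hi hr
    have h2 : T.parent^[k] (T.leaf l) = T.root := by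
      rw [show k = (k - i) + i by omega, Function.iterate_add_apply, hr, T.iterate_root]
    exact hk' i hi (by rw [hr, ← h2, hk])
  have hstep : ∀ i < k, T.parent^[i] (T.leaf l) ≠ T.parent^[i + 1] (T.leaf l) := by
    intro i hi he
    have h2 := he.trans (Function.iterate_succ_apply' T.parent i (T.leaf l))
    exact hroot i hi (T.eq_root_of_parent_eq h2.symm)
  have hmono : ∀ i < k, T.nodeNum (T.parent^[i] (T.leaf l)) ≤
      T.nodeNum (T.parent^[i + 1] (T.leaf l)) := by
    intro i hi
    rcases Nat.eq_zero_or_pos i with rfl | hipos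
    · rw [show T.parent^[0] (T.leaf l) = T.leaf l from rfl, T.nodeNum_leaf l]
      exact Nat.zero_le _
    · obtain ⟨j, rfl⟩ : ∃ j : ℕ, i = j + 1 := ⟨i - 1, by omega⟩
      have hchild : T.parent^[j] (T.leaf l) ∈ T.children (T.parent^[j + 1] (T.leaf l)) :=
        ⟨(Function.iterate_succ_apply' T.parent j (T.leaf l)).symm, hstep j (by omega)⟩
      have hchild' : T.parent^[j + 1] (T.leaf l) ∈
          T.children (T.parent^[j + 1 + 1] (T.leaf l)) :=
        ⟨(Function.iterate_succ_apply' T.parent (j + 1) (T.leaf l)).symm, hstep (j + 1) hi⟩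
      have hne1 : T.children (T.parent^[j + 1] (T.leaf l)) ≠ ∅ :=
        fun h => Set.eq_empty_iff_forall_notMem.mp h _ hchild
      have hne2 : T.children (T.parent^[j + 1 + 1] (T.leaf l)) ≠ ∅ :=
        fun h => Set.eq_empty_iff_forall_notMem.mp h _ hchild'
      have hd : T.depth (T.parent^[j + 1] (T.leaf l)) =
          T.depth (T.parent^[j + 1 + 1] (T.leaf l)) + 1 :=
        T.depth_child (Function.iterate_succ_apply' T.parent (j + 1) (T.leaf l)).symm
          (hstep (j + 1) hi)
      rw [nodeNum, nodeNum, if_neg hne1, if_neg hne2, hd]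
      omega
  have htel := T.upSum_telescope T.nodeNum k (T.leaf l) hmono
  have hw : T.wCl = fun w => T.nodeNum (T.parent w) - T.nodeNum w := rfl
  rw [hw, htel, hk, T.nodeNum_leaf l, Nat.sub_zero, nodeNum, if_neg hm]

end RPhylo

/-- **Theorem (clade metrization).** For a rooted binary phylogenetic tree `T` on `X`
with `|X| = N`, equipped with the clade metrization, and distinct taxa `x ≠ y`, the
tree-metric distance `d_Cl(x,y)` (the sum of the edge weights along the path between
the leaves `x` and `y`) equals `2·(1 + N - |C_{x,y}|)`, where `C_{x,y}` is the set of
clades displayed on `T` containing both `x` and `y`. -/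
theorem clade_metrization_distance
    {X V : Type*} [Fintype X] [Fintype V] [DecidableEq V]
    (T : RPhylo X V) (hbin : T.IsBinary)
    (x y : X) (hxy : x ≠ y)
    (m : V) (hm : T.IsMRCA {T.leaf x, T.leaf y} m)
    (kx ky : ℕ)
    (hkx : T.parent^[kx] (T.leaf x) = m) (hkx' : ∀ i < kx, T.parent^[i] (T.leaf x) ≠ m)
    (hky : T.parent^[ky] (T.leaf y) = m) (hky' : ∀ i < ky, T.parent^[i] (T.leaf y) ≠ m) :
    T.upSum T.wCl (T.leaf x) kx + T.upSum T.wCl (T.leaf y) ky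
      = 2 * (1 + Fintype.card X
          - ({A : Set X | (∃ v : V, T.clade v = A) ∧ x ∈ A ∧ y ∈ A} : Set (Set X)).ncard) := by
  classical
  set d := T.depth m with hd
  have hmlx : m ≠ T.leaf x := by
    intro h
    have hax : T.Anc m (T.leaf y) := hm.1 (T.leaf y) (by simp)
    obtain ⟨n, hn⟩ := hax
    rw [h] at hn
    exact hxy (T.leaf_inj (T.eq_leaf_of_iterate n (T.leaf y) hn)).symm
  have hkx0 : kx ≠ 0 := fun h => hmlx (by rw [← hkx, h]; rfl)
  have hmint : T.children m ≠ ∅ := by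
    intro hc
    have hchild : T.parent^[kx - 1] (T.leaf x) ∈ T.children m := by
      refine ⟨?_, hkx' (kx - 1) (by omega)⟩
      have h1 : T.parent (T.parent^[kx - 1] (T.leaf x))
          = T.parent^[kx - 1 + 1] (T.leaf x) :=
        (Function.iterate_succ_apply' _ _ _).symm
      rw [h1, show kx - 1 + 1 = kx by omega]
      exact hkx
    exact Set.eq_empty_iff_forall_notMem.mp hc _ hchild
  rw [T.upSum_wCl hkx hkx' hmint, T.upSum_wCl hky hky' hmint]
  have hset : {A : Set X | (∃ v : V, T.clade v = A) ∧ x ∈ A ∧ y ∈ A}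
      = (fun i => T.clade (T.parent^[i] m)) '' ↑(Finset.range (d + 1)) := by
    ext A
    simp only [Set.mem_setOf_eq, Set.mem_image, Finset.coe_range, Set.mem_Iio]
    constructor
    · rintro ⟨⟨v, rfl⟩, hx, hy⟩
      have hanc : T.Anc v m := by
        apply hm.2 v
        intro u hu
        simp only [Set.mem_insert_iff, Set.mem_singleton_iff] at hu
        rcases hu with rfl | rfl
        · exact hx
        · exact hy
      obtain ⟨i, hi⟩ := hanc
      rcases le_or_gt i d with hid | hid
      · exact ⟨i, by omega, by rw [hi]⟩
      · refine ⟨d, by omega, ?_⟩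
        rw [T.iterate_of_depth_le (le_of_eq hd.symm), ← hi,
          T.iterate_of_depth_le (by omega)]
    · rintro ⟨i, hid, rfl⟩
      exact ⟨⟨T.parent^[i] m, rfl⟩, T.anc_trans ⟨i, rfl⟩ ⟨kx, hkx⟩,
        T.anc_trans ⟨i, rfl⟩ ⟨ky, hky⟩⟩
  have hmono2 : ∀ i j, i ≤ j → T.clade (T.parent^[i] m) ⊆ T.clade (T.parent^[j] m) := by
    intro i j hij
    apply T.clade_mono
    exact ⟨j - i, by rw [← Function.iterate_add_apply, show j - i + i = j by omega]⟩
  have hstrict : ∀ i < d, ∃ z : X,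
      z ∈ T.clade (T.parent^[i + 1] m) ∧ z ∉ T.clade (T.parent^[i] m) := by
    intro i hid
    apply T.clade_exists_not (Function.iterate_succ_apply' T.parent i m).symm
    intro he
    have h2 := he.trans (Function.iterate_succ_apply' T.parent i m)
    have hr := T.eq_root_of_parent_eq h2.symm
    have hdi := T.depth_iterate (show i ≤ T.depth m by omega)
    rw [hr] at hdi
    have hr0 : T.depth T.root ≤ 0 :=
      T.depth_le (show T.parent^[0] T.root = T.root from rfl)
    omega
  have hkey : ∀ i j, i < j → j ≤ d →
      T.clade (T.parent^[i] m) ≠ T.clade (T.parent^[j] m) := by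
    intro i j hij hjd heq
    obtain ⟨z, hz1, hz2⟩ := hstrict i (by omega)
    exact hz2 (heq ▸ hmono2 (i + 1) j (by omega) hz1)
  have hinj : Set.InjOn (fun i => T.clade (T.parent^[i] m)) ↑(Finset.range (d + 1)) := by
    intro i hi j hj heq
    simp only [Finset.coe_range, Set.mem_Iio] at hi hj
    rcases lt_trichotomy i j with h | h | h
    · exact absurd heq (hkey i j h (by omega))
    · exact h
    · exact absurd heq.symm (hkey j i h (by omega))
  rw [hset, Set.ncard_image_of_injOn hinj, Set.ncard_coe_finset, Finset.card_range]
  omega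
end
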